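/- Let $1 < p < N$, $\mu \in (0, p)$, $N/p < q < \min\{N, N/\mu\}$, and $0 < t < q(p^*_\mu - 1)$. Define $p^* = \frac{Np}{N-p}$, $p^*_\mu = \frac{p(N-\mu)}{N-p}$, $q^*$ by $1/q^* = 1/q - 1/N$, and $\theta = \dfrac{\frac{1}{p^*} - \frac{1}{t} + \frac{\mu q}{N t}}{\frac{1}{p} - \frac{1}{q^*(p-1)}}$. Then $\frac{\theta t}{q(p-1)} < 1$. -/

import Mathlib

lemma ckn_denominator_pos {N p q : ℝ} (hp : 1 < p) (hpN : p ≤ N) (hq : N / p < q) :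
    0 < 1 / p - (1 / q - 1 / N) / (p - 1) := by
  have hN : 0 < N := by linarith
  have hq0 : 0 < q := (div_pos hN (by linarith)).trans hq
  have hq_inv : 1 / q < p / N := by
    rwa [one_div_lt hq0 (by positivity), one_div_div]
  have hpN' : p * (p - 1) / N ≤ p - 1 := by
    rw [div_le_iff₀ hN]; nlinarith
  rw [sub_pos, div_lt_div_iff₀ (by linarith) (by linarith)]
  calc (1 / q - 1 / N) * p < (p / N - 1 / N) * p := by gcongr
    _ = p * (p - 1) / N := by ring
    _ ≤ 1 * (p - 1) := by linarith

lemma ckn_gap_eq {N p μ q t : ℝ} (hN : N ≠ 0) (hp : p ≠ 0) (hp1 : p - 1 ≠ 0) (hNp : N - p ≠ 0)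
    (hq : q ≠ 0) (ht : t ≠ 0) :
    q * (p - 1) * (1 / p - (1 / q - 1 / N) / (p - 1))
        - (1 / (N * p / (N - p)) - 1 / t + μ * q / (N * t)) * t
      = (q * (p * (N - μ) / (N - p) - 1) - t) * ((N - p) / (N * p)) := by
  field_simp
  ring

lemma ckn_ratio_lt_one_iff {N p μ q t : ℝ} (hp : 1 < p) (hpN : p < N) (hq : N / p < q)
    (ht : t ≠ 0) :
    ((1 / (N * p / (N - p)) - 1 / t + μ * q / (N * t)) / (1 / p - (1 / q - 1 / N) / (p - 1)))
        * t / (q * (p - 1)) < 1 ↔ t < q * (p * (N - μ) / (N - p) - 1) := by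
  have hN : 0 < N := by linarith
  have hq0 : 0 < q := (div_pos hN (by linarith)).trans hq
  have hD := ckn_denominator_pos hp hpN.le hq
  rw [div_lt_one (mul_pos hq0 (by linarith)), div_mul_eq_mul_div, div_lt_iff₀ hD, ← sub_pos,
    ckn_gap_eq hN.ne' (by linarith) (by linarith) (by linarith) hq0.ne' ht,
    mul_pos_iff_of_pos_right (div_pos (by linarith) (by positivity)), sub_pos]

theorem stmt_13_general (N p μ q t qs : ℝ) (hp : 1 < p) (hpN : p < N)
    (hq1 : N / p < q)
    (ht0 : 0 < t) (ht1 : t < q * (p * (N - μ) / (N - p) - 1))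
    (hqs : 1 / qs = 1 / q - 1 / N) :
    ((1 / (N * p / (N - p)) - 1 / t + μ * q / (N * t)) /
          (1 / p - 1 / (qs * (p - 1)))) * t / (q * (p - 1)) < 1 := by
  rw [div_mul_eq_div_div 1 qs, hqs]
  exact (ckn_ratio_lt_one_iff hp hpN hq1 ht0.ne').mpr ht1

theorem stmt_13 (N p μ q t qs : ℝ) (hp : 1 < p) (hpN : p < N)
    (hμ0 : 0 < μ) (hμp : μ < p)
    (hq1 : N / p < q) (hq2 : q < min N (N / μ))
    (ht0 : 0 < t) (ht1 : t < q * (p * (N - μ) / (N - p) - 1))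
    (hqs : 1 / qs = 1 / q - 1 / N) :
    ((1 / (N * p / (N - p)) - 1 / t + μ * q / (N * t)) /
          (1 / p - 1 / (qs * (p - 1)))) * t / (q * (p - 1)) < 1 :=
  stmt_13_general N p μ q t qs hp hpN hq1 ht0 ht1 hqs
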